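/- arXiv:1903.05351 — 2 statements merged into one kernel-verified Lean document; each statement's English description precedes it below -/
import Mathlib

section
/- Let n, m, t be positive integers with t ≤ n, and let f : 𝔽₂ⁿ → 𝔽₂^m be a multi-output Boolean function. Then f is a t-th order correlation-immune function if and only if its Walsh transform satisfies ∑_{x ∈ 𝔽₂ⁿ} (−1)^{v·f(x) + u·x} = 0 for every nonzero v ∈ 𝔽₂^m and every u ∈ 𝔽₂ⁿ with 1 ≤ wt(u) ≤ t, where · denotes the inner product modulo 2 and wt(u) is the Hamming weight of u. -/
noncomputable section

open Finset

/-- Inner product modulo 2 on `𝔽₂ⁿ`. -/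
def dotp {n : ℕ} (c x : Fin n → ZMod 2) : ZMod 2 := ∑ j, c j * x j

/-- Hamming weight of a vector in `𝔽₂ⁿ`. -/
def wt {n : ℕ} (c : Fin n → ZMod 2) : ℕ := (Finset.univ.filter fun j => c j ≠ 0).card

/-- `f` is `t`-th order correlation-immune: fixing any `t` coordinates does not
change the output distribution (counting form). -/
def CI {n : ℕ} {A : Type*} (t : ℕ) (f : (Fin n → ZMod 2) → A) : Prop :=
  ∀ S : Finset (Fin n), S.card = t → ∀ a : Fin n → ZMod 2, ∀ α : A,
    2 ^ t * Nat.card {x : Fin n → ZMod 2 // f x = α ∧ ∀ j ∈ S, x j = a j}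
      = Nat.card {x : Fin n → ZMod 2 // f x = α}

/-- Binary expansion of `k` as a vector in `𝔽₂ⁿ`, `k = ∑ x_j 2^j`. -/
def bin (n k : ℕ) : Fin n → ZMod 2 := fun j => ((k / 2 ^ (j : ℕ)) % 2 : ℕ)

/-- `ω i = exp(2π√-1 / 2^i)`, a primitive `2^i`-th root of unity in `ℂ`. -/
def ω (i : ℕ) : ℂ := Complex.exp (2 * Real.pi * Complex.I / 2 ^ i)

/-!
Write `ε z = (-1)^z` and `walsh g u = ∑ₓ ε(u·x) g(x)`. Correlation immunity says that for every
output `α` the indicator of the fibre `f⁻¹(α)` has the same mass on each subcube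
`{x | x = a on S}` with `#S = t`. Fourier analysis on `𝔽₂^S` shows that this holds iff the Walsh
coefficients of that indicator vanish at every nonzero `u` supported in `S`, i.e. at every `u`
with `1 ≤ wt u ≤ t`. Finally `f̂(u, v)` is the Walsh transform in `v` of
`α ↦ walsh 1_{f⁻¹(α)} u`, so by Fourier inversion on `𝔽₂^m` these coefficients all vanish iff
`f̂(u, v) = 0` for every `v`, and the term `v = 0` is `∑ₓ ε(u·x) = 0` anyway.
-/

def ε (z : ZMod 2) : ℂ := (-1) ^ z.val

@[simp] lemma ε_zero : ε 0 = 1 := rfl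

lemma ε_add (a b : ZMod 2) : ε (a + b) = ε a * ε b := by
  simp only [ε, ZMod.val_add, ← pow_add]
  exact (neg_one_pow_eq_pow_mod_two _).symm

lemma ε_of_ne_zero {z : ZMod 2} (hz : z ≠ 0) : ε z = -1 := by
  obtain rfl : z = 1 := by revert z; decide
  simp [ε, ZMod.val_one]

lemma vec_add_self {ι : Type*} (x : ι → ZMod 2) : x + x = 0 :=
  funext fun i => CharTwo.add_self_eq_zero (x i)

lemma vec_add_eq_zero_iff {ι : Type*} {x y : ι → ZMod 2} : x + y = 0 ↔ x = y := by
  rw [← vec_add_self y, add_left_inj]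

def fiberIndicator {X Y : Type*} [DecidableEq Y] (f : X → Y) (y : Y) (x : X) : ℂ :=
  if f x = y then 1 else 0

section

variable {ι : Type*} [Fintype ι] [DecidableEq ι]

def supportedIn (S : Finset ι) : Finset (ι → ZMod 2) :=
  Fintype.piFinset fun j => if j ∈ S then univ else {0}

lemma mem_supportedIn {S : Finset ι} {a : ι → ZMod 2} :
    a ∈ supportedIn S ↔ ∀ j ∉ S, a j = 0 := by
  simp only [supportedIn, Fintype.mem_piFinset]
  refine forall_congr' fun j => ?_
  by_cases hj : j ∈ S <;> simp [hj]

lemma card_supportedIn (S : Finset ι) : #(supportedIn S) = 2 ^ #S := by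
  simp [supportedIn, Fintype.card_piFinset, apply_ite]

lemma supportedIn_univ : supportedIn (univ : Finset ι) = univ :=
  eq_univ_of_forall fun _ => mem_supportedIn.mpr fun j hj => absurd (mem_univ j) hj

def agreeOn (S : Finset ι) (a : ι → ZMod 2) : Finset (ι → ZMod 2) :=
  Fintype.piFinset fun j => if j ∈ S then {a j} else univ

lemma mem_agreeOn {S : Finset ι} {a x : ι → ZMod 2} : x ∈ agreeOn S a ↔ ∀ j ∈ S, x j = a j := by
  simp only [agreeOn, Fintype.mem_piFinset]
  refine forall_congr' fun j => ?_
  by_cases hj : j ∈ S <;> simp [hj]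

lemma sum_supportedIn_ε_dotProduct (S : Finset ι) (w : ι → ZMod 2) :
    ∑ a ∈ supportedIn S, ε (w ⬝ᵥ a) = if ∀ j ∈ S, w j = 0 then (2 : ℂ) ^ #S else 0 := by
  split_ifs with hw
  · have hdot : ∀ a ∈ supportedIn S, w ⬝ᵥ a = 0 := fun a ha =>
      sum_eq_zero fun j _ => by
        by_cases hj : j ∈ S
        · simp [hw j hj]
        · simp [mem_supportedIn.mp ha j hj]
    rw [sum_congr rfl fun a ha => by rw [hdot a ha, ε_zero], sum_const, card_supportedIn]
    simp
  · push Not at hw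
    obtain ⟨j, hjS, hj⟩ := hw
    refine sum_involution (fun a _ => a + Pi.single j 1) (fun a _ => ?_) (fun a _ _ => ?_)
      (fun a ha => ?_) (fun a _ => ?_)
    · rw [dotProduct_add, dotProduct_single, mul_one, ε_add, ε_of_ne_zero hj]
      ring
    · simp
    · refine mem_supportedIn.mpr fun i hi => ?_
      have hij : i ≠ j := fun h => hi (h ▸ hjS)
      simp [mem_supportedIn.mp ha i hi, hij]
    · rw [add_assoc, vec_add_self, add_zero]

lemma sum_ε_dotProduct (w : ι → ZMod 2) :
    ∑ a, ε (w ⬝ᵥ a) = if w = 0 then (2 : ℂ) ^ Fintype.card ι else 0 := by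
  simpa [supportedIn_univ, funext_iff] using sum_supportedIn_ε_dotProduct univ w

def walsh (g : (ι → ZMod 2) → ℂ) (u : ι → ZMod 2) : ℂ := ∑ x, ε (u ⬝ᵥ x) * g x

lemma walsh_walsh (g : (ι → ZMod 2) → ℂ) (x : ι → ZMod 2) :
    walsh (walsh g) x = 2 ^ Fintype.card ι * g x := by
  have hε : ∀ u y : ι → ZMod 2, ε (x ⬝ᵥ u) * ε (u ⬝ᵥ y) = ε ((x + y) ⬝ᵥ u) := fun u y => by
    rw [add_dotProduct, ε_add, dotProduct_comm u y]
  simp only [walsh, mul_sum, ← mul_assoc, hε]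
  rw [sum_comm]
  simp only [← sum_mul, sum_ε_dotProduct, vec_add_eq_zero_iff, ite_mul, zero_mul]
  rw [sum_ite_eq]
  simp

lemma walsh_eq_zero_iff {g : (ι → ZMod 2) → ℂ} : walsh g = 0 ↔ g = 0 := by
  refine ⟨fun h => funext fun x => ?_, fun h => by subst h; ext; simp [walsh]⟩
  have := walsh_walsh g x
  rw [h] at this
  simpa [walsh] using this.symm

lemma two_pow_card_mul_sum_agreeOn (g : (ι → ZMod 2) → ℂ) (S : Finset ι) (a : ι → ZMod 2) :
    2 ^ #S * ∑ x ∈ agreeOn S a, g x = ∑ u ∈ supportedIn S, ε (u ⬝ᵥ a) * walsh g u := by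
  have hε : ∀ u x : ι → ZMod 2, ε (u ⬝ᵥ a) * (ε (u ⬝ᵥ x) * g x) = ε ((a + x) ⬝ᵥ u) * g x :=
    fun u x => by rw [← mul_assoc, add_dotProduct, ε_add, dotProduct_comm a, dotProduct_comm x]
  simp only [walsh, mul_sum, hε]
  rw [sum_comm]
  simp only [← sum_mul, sum_supportedIn_ε_dotProduct, ite_mul, zero_mul, ← sum_filter]
  refine sum_congr (ext fun x => ?_) fun _ _ => rfl
  simp [mem_agreeOn, CharTwo.add_eq_zero, eq_comm]

lemma dotProduct_piecewise_zero {S : Finset ι} {u : ι → ZMod 2} (hu : u ∈ supportedIn S)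
    (x : ι → ZMod 2) : u ⬝ᵥ (S.piecewise x 0 : ι → ZMod 2) = u ⬝ᵥ x := by
  refine sum_congr rfl fun j _ => ?_
  by_cases hj : j ∈ S
  · rw [piecewise_eq_of_mem _ _ _ hj]
  · simp [mem_supportedIn.mp hu j hj]

lemma piecewise_zero_eq_iff_mem_agreeOn {S : Finset ι} {a : ι → ZMod 2}
    (ha : a ∈ supportedIn S) (x : ι → ZMod 2) :
    (S.piecewise x 0 : ι → ZMod 2) = a ↔ x ∈ agreeOn S a := by
  simp only [funext_iff, Finset.piecewise, mem_agreeOn]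
  refine ⟨fun h j hj => by simpa [hj] using h j, fun h j => ?_⟩
  by_cases hj : j ∈ S
  · simp [hj, h j hj]
  · simp [hj, mem_supportedIn.mp ha j hj]

lemma walsh_eq_sum_agreeOn (g : (ι → ZMod 2) → ℂ) {S : Finset ι} {u : ι → ZMod 2}
    (hu : u ∈ supportedIn S) :
    walsh g u = ∑ a ∈ supportedIn S, ε (u ⬝ᵥ a) * ∑ x ∈ agreeOn S a, g x := by
  have hmaps : ∀ x ∈ (univ : Finset (ι → ZMod 2)),
      (S.piecewise x 0 : ι → ZMod 2) ∈ supportedIn S := fun x _ =>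
    mem_supportedIn.mpr fun j hj => S.piecewise_eq_of_notMem _ _ hj
  rw [walsh, ← sum_fiberwise_of_maps_to hmaps]
  refine sum_congr rfl fun a ha => ?_
  rw [mul_sum]
  refine sum_congr (ext fun x => by simp [piecewise_zero_eq_iff_mem_agreeOn ha]) fun x hx => ?_
  rw [← dotProduct_piecewise_zero hu x, (piecewise_zero_eq_iff_mem_agreeOn ha x).mpr hx]

lemma sum_agreeOn_balanced_iff_walsh_eq_zero (g : (ι → ZMod 2) → ℂ) (S : Finset ι) :
    (∀ a, 2 ^ #S * ∑ x ∈ agreeOn S a, g x = ∑ x, g x) ↔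
      ∀ u ∈ supportedIn S, u ≠ 0 → walsh g u = 0 := by
  constructor
  · intro hbal u hu hu0
    have hS : ¬∀ j ∈ S, u j = 0 := fun h =>
      hu0 (funext fun j => if hj : j ∈ S then h j hj else mem_supportedIn.mp hu j hj)
    have hrestr : ∀ a, ∑ x ∈ agreeOn S a, g x = (∑ x, g x) / 2 ^ #S := fun a => by
      rw [← hbal a]; field_simp
    rw [walsh_eq_sum_agreeOn g hu]
    simp only [hrestr, ← sum_mul, sum_supportedIn_ε_dotProduct, if_neg hS, zero_mul]
  · intro hwalsh a
    rw [two_pow_card_mul_sum_agreeOn, sum_eq_single_of_mem 0 (mem_supportedIn.mpr fun _ _ => rfl)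
      fun u hu hu0 => by rw [hwalsh u hu hu0, mul_zero]]
    simp [walsh]

lemma forall_card_eq_forall_supportedIn_iff {t : ℕ} (ht : t ≤ Fintype.card ι)
    {P : (ι → ZMod 2) → Prop} :
    (∀ S : Finset ι, #S = t → ∀ u ∈ supportedIn S, P u) ↔ ∀ u, #{j | u j ≠ 0} ≤ t → P u := by
  refine ⟨fun h u hu => ?_, fun h S hS u hu => h u ?_⟩
  · obtain ⟨S, hsupp, hS⟩ := exists_superset_card_eq hu ht
    exact h S hS u (mem_supportedIn.mpr fun j hj => by_contra fun hj' => hj (hsupp (by simpa)))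
  · exact hS ▸ card_le_card fun j hj => by_contra fun hjS => by
      simp [mem_supportedIn.mp hu j hjS] at hj

end

section

variable {ι κ : Type*} [Fintype ι] [DecidableEq ι] [Fintype κ] [DecidableEq κ]

lemma walsh_walsh_fiberIndicator (f : (ι → ZMod 2) → κ → ZMod 2) (u : ι → ZMod 2)
    (v : κ → ZMod 2) :
    walsh (fun α => walsh (fiberIndicator f α) u) v = ∑ x, ε (v ⬝ᵥ f x + u ⬝ᵥ x) := by
  simp only [walsh, fiberIndicator, mul_sum, mul_ite, mul_one, mul_zero]
  rw [sum_comm]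
  simp [ε_add, mul_comm]

lemma forall_ne_zero_sum_ε_eq_zero_iff (f : (ι → ZMod 2) → κ → ZMod 2) {u : ι → ZMod 2}
    (hu : u ≠ 0) :
    (∀ v, v ≠ 0 → ∑ x, ε (v ⬝ᵥ f x + u ⬝ᵥ x) = 0) ↔ ∀ α, walsh (fiberIndicator f α) u = 0 := by
  have hv0 : ∑ x, ε ((0 : κ → ZMod 2) ⬝ᵥ f x + u ⬝ᵥ x) = 0 := by
    simpa [hu] using sum_ε_dotProduct u
  have hinv : (fun α => walsh (fiberIndicator f α) u) = 0 ↔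
      ∀ v, ∑ x, ε (v ⬝ᵥ f x + u ⬝ᵥ x) = 0 := by
    rw [← walsh_eq_zero_iff, funext_iff]
    simp only [walsh_walsh_fiberIndicator, Pi.zero_apply]
  simp only [funext_iff, Pi.zero_apply] at hinv
  rw [hinv]
  exact ⟨fun h v => if hv : v = 0 then hv ▸ hv0 else h v hv, fun h v _ => h v⟩

end

lemma natCard_subtype_eq_sum_ite {X : Type*} [Fintype X] (p : X → Prop) [DecidablePred p] :
    (Nat.card {x // p x} : ℂ) = ∑ x, if p x then 1 else 0 := by
  rw [Nat.card_eq_fintype_card, Fintype.card_subtype, sum_boole]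

lemma CI_iff_sum_agreeOn_balanced {n : ℕ} {A : Type*} [DecidableEq A] (t : ℕ)
    (f : (Fin n → ZMod 2) → A) :
    CI t f ↔ ∀ S : Finset (Fin n), #S = t → ∀ α, ∀ a,
      2 ^ #S * ∑ x ∈ agreeOn S a, fiberIndicator f α x = ∑ x, fiberIndicator f α x := by
  refine forall₂_congr fun S hS => ?_
  rw [forall_comm]
  refine forall₂_congr fun α a => ?_
  rw [hS, ← univ_inter (agreeOn S a), ← sum_ite_mem]
  simp only [fiberIndicator, ← ite_and, mem_agreeOn, and_comm (b := f _ = α),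
    ← natCard_subtype_eq_sum_ite]
  norm_cast

theorem stmt5_general (n m t : ℕ) (htn : t ≤ n)
    (f : (Fin n → ZMod 2) → (Fin m → ZMod 2)) :
    CI t f ↔ ∀ v : Fin m → ZMod 2, v ≠ 0 → ∀ u : Fin n → ZMod 2, 1 ≤ wt u → wt u ≤ t →
      ∑ x : Fin n → ZMod 2, (-1 : ℂ) ^ ((∑ i, v i * f x i) + dotp u x).val = 0 := by
  have hwt : ∀ u : Fin n → ZMod 2, 1 ≤ wt u ↔ u ≠ 0 := fun u => by
    simp [wt, Nat.one_le_iff_ne_zero, funext_iff]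
  calc CI t f
      ↔ ∀ S : Finset (Fin n), #S = t → ∀ u ∈ supportedIn S, u ≠ 0 →
          ∀ α, walsh (fiberIndicator f α) u = 0 := by
        rw [CI_iff_sum_agreeOn_balanced]
        refine forall₂_congr fun S _ => ?_
        simp only [sum_agreeOn_balanced_iff_walsh_eq_zero]
        exact ⟨fun h u hu hu0 α => h α u hu hu0, fun h α u hu hu0 => h u hu hu0 α⟩
    _ ↔ ∀ u : Fin n → ZMod 2, wt u ≤ t → u ≠ 0 → ∀ α, walsh (fiberIndicator f α) u = 0 :=
        forall_card_eq_forall_supportedIn_iff (by simpa using htn)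
    _ ↔ ∀ u : Fin n → ZMod 2, wt u ≤ t → u ≠ 0 → ∀ v, v ≠ 0 →
          ∑ x, ε (v ⬝ᵥ f x + u ⬝ᵥ x) = 0 :=
        forall₂_congr fun u _ => forall_congr' fun hu =>
          (forall_ne_zero_sum_ε_eq_zero_iff f hu).symm
    _ ↔ _ := by
        -- `∑ i, v i * f x i` and `dotp u x` unfold to `⬝ᵥ`, and `(-1) ^ z.val` to `ε z`
        simp only [hwt]
        exact ⟨fun h v hv u hu hut => h u hut hu v hv, fun h u hut hu v hv => h v hv u hu hut⟩

/-- Walsh-transform characterization: `f : 𝔽₂ⁿ → 𝔽₂^m` is `t`-th order correlation-immune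
iff `f̂(u,v) = ∑_x (-1)^{v·f(x)+u·x} = 0` for every nonzero `v` and every `u` with
`1 ≤ wt(u) ≤ t`. -/
theorem stmt5 (n m t : ℕ) (hn : 0 < n) (hm : 0 < m) (ht : 0 < t) (htn : t ≤ n)
    (f : (Fin n → ZMod 2) → (Fin m → ZMod 2)) :
    CI t f ↔ ∀ v : Fin m → ZMod 2, v ≠ 0 → ∀ u : Fin n → ZMod 2, 1 ≤ wt u → wt u ≤ t →
      ∑ x : Fin n → ZMod 2, (-1 : ℂ) ^ ((∑ i, v i * f x i) + dotp u x).val = 0 :=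
  stmt5_general n m t htn f
end
end

section
/- Let n, t be positive integers with t ≤ n, and let f : 𝔽₂ⁿ → 𝔽₂ be a Boolean function. Then f is a t-th order correlation-immune function if and only if ℱ_{π·f}(2^{n−t}) = ∑_{k=0}^{2ⁿ−1} (−1)^{(π·f)(k)} ξ^{−k·2^{n−t}} = 0 for every permutation π of {1,…,n}, where (π·f)(x₁,…,x_n) = f(x_{π(1)},…,x_{π(n)}) and ξ = exp(2π√−1/2ⁿ). -/
noncomputable section

open Finset

/-!
Let `η = (ω t)⁻¹`, a primitive `2^t`-th root of unity. The factor `ω n ^ (-k 2^{n-t}) = η^k` only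
sees `k mod 2^t`, i.e. the first `t` binary digits of `k`, so the coefficient for `π` is
`∑_{m < 2^t} D(m) η^m`, where `D(m)` is the signed count of `π·f` over the subcube on which the
first `t` coordinates spell out `m`. Since `η^{2^{t-1}} = -1` this is
`∑_{m < 2^{t-1}} (D(m) - D(m + 2^{t-1})) η^m`, and `1, η, …, η^{2^{t-1}-1}` are linearly
independent over `ℤ` because the minimal polynomial of `η` has degree `φ(2^t) = 2^{t-1}`. So the
coefficient vanishes iff flipping the `t`-th coordinate never changes these signed counts.
Conjugating by all permutations, this says that the signed count of `f` over a subcube of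
codimension `t` does not change when one fixed coordinate is flipped, hence does not depend on
the fixed values at all, which is correlation immunity.
-/

theorem Function.apply_eq_apply_of_update_invariant {ι α β : Type*} [DecidableEq ι]
    {φ : (ι → α) → β} {S : Finset ι} (h : ∀ i ∈ S, ∀ b a, φ (Function.update b i a) = φ b)
    {b b' : ι → α} (hbb' : ∀ j ∉ S, b j = b' j) : φ b = φ b' := by
  induction S using Finset.induction_on generalizing b with
  | empty => exact congrArg φ (funext fun j => hbb' j (notMem_empty j))
  | insert i S hi ih =>
    calc φ b = φ (Function.update b i (b' i)) := (h i (mem_insert_self i S) b _).symm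
      _ = φ b' := by
        refine ih (fun j hj => h j (mem_insert_of_mem hj)) fun j hj => ?_
        by_cases hji : j = i
        · rw [hji, Function.update_self]
        · rw [Function.update_of_ne hji, hbb' j (by simp [hji, hj])]

theorem Equiv.Perm.exists_map_finset_eq_and_apply_eq {α : Type*} [Fintype α] [DecidableEq α]
    {s s' : Finset α} (h : #s = #s') {a a' : α} (ha : a ∈ s) (ha' : a' ∈ s') :
    ∃ σ : Equiv.Perm α, s.map σ.toEmbedding = s' ∧ σ a = a' := by
  obtain ⟨σ, hσ⟩ := Equiv.Perm.exists_map_finset_eq s s' h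
  have hσa : σ a ∈ s' := hσ ▸ mem_map_of_mem _ ha
  refine ⟨Equiv.swap (σ a) a' * σ, ?_, by simp⟩
  have hswap : s'.map (Equiv.swap (σ a) a').toEmbedding = s' := by
    refine eq_of_subset_of_card_le (fun x hx => ?_) (card_map _).ge
    obtain ⟨y, hy, rfl⟩ := mem_map.1 hx
    simp only [Equiv.toEmbedding_apply, Equiv.swap_apply_def]
    split_ifs <;> assumption
  calc s.map (Equiv.swap (σ a) a' * σ).toEmbedding
      = (s.map σ.toEmbedding).map (Equiv.swap (σ a) a').toEmbedding := by rw [map_map]; rfl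
    _ = s' := by rw [hσ, hswap]

theorem Nat.mod_two_pow_eq_iff {k m t : ℕ} (hm : m < 2 ^ t) :
    k % 2 ^ t = m ↔ ∀ j < t, k.testBit j = m.testBit j := by
  constructor
  · rintro rfl j hj
    simp [Nat.testBit_mod_two_pow, hj]
  · refine fun h => Nat.eq_of_testBit_eq fun j => ?_
    rw [Nat.testBit_mod_two_pow]
    by_cases hj : j < t
    · simp [hj, h j hj]
    · have : m < 2 ^ j := hm.trans_le (Nat.pow_le_pow_right two_pos (not_lt.1 hj))
      simp [hj, Nat.testBit_eq_false_of_lt this]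

theorem Finset.sum_range_two_mul_eq_of_pow_eq_neg_one {R : Type*} [CommRing R] {ζ : R} {N : ℕ}
    (hζ : ζ ^ N = -1) (c : ℕ → R) :
    ∑ m ∈ range (2 * N), c m * ζ ^ m = ∑ m ∈ range N, (c m - c (m + N)) * ζ ^ m := by
  rw [two_mul, sum_range_add, ← sum_add_distrib]
  refine sum_congr rfl fun m _ => ?_
  rw [pow_add, hζ, add_comm N m]
  ring

theorem IsPrimitiveRoot.pow_eq_neg_one_of_two_mul {R : Type*} [CommRing R] [IsDomain R] {ζ : R}
    {N : ℕ} (hζ : IsPrimitiveRoot ζ (2 * N)) (hN : N ≠ 0) : ζ ^ N = -1 := by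
  have := hζ.pow_of_dvd hN (dvd_mul_left N 2)
  rw [Nat.mul_div_cancel _ (Nat.pos_of_ne_zero hN)] at this
  exact this.eq_neg_one_of_two_right

theorem IsPrimitiveRoot.eq_zero_of_sum_eq_zero {K : Type*} [CommRing K] [IsDomain K]
    [CharZero K] {ζ : K} {N : ℕ} (hζ : IsPrimitiveRoot ζ N) {c : ℕ → ℤ}
    (h : ∑ m ∈ range N.totient, (c m : K) * ζ ^ m = 0) {m : ℕ} (hm : m < N.totient) :
    c m = 0 := by
  open Polynomial in
  set p : ℤ[X] := ∑ i : Fin N.totient, C (c i) * X ^ (i : ℕ)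
  have hp : aeval ζ p = 0 := by
    simpa [p, Fin.sum_univ_eq_sum_range (fun i => (c i : K) * ζ ^ i)] using h
  have hp0 : p = 0 := by
    by_contra hp0
    have hN : 0 < N := Nat.totient_pos.1 (by omega)
    have hdvd := minpoly.isIntegrallyClosed_dvd (hζ.isIntegral hN) hp
    have hlt : p.natDegree < N.totient :=
      (natDegree_lt_iff_degree_lt hp0).2 (degree_sum_fin_lt _)
    have := natDegree_le_of_dvd hdvd hp0
    have := hζ.totient_le_degree_minpoly
    omega
  have hcoeff := congrArg (coeff · m) hp0
  simp only [p, finsetSum_coeff, coeff_C_mul_X_pow, coeff_zero] at hcoeff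
  rwa [Fin.sum_univ_eq_sum_range (fun i => if m = i then c i else 0), sum_ite_eq,
    if_pos (mem_range.2 hm)] at hcoeff

theorem bin_apply (n k : ℕ) (j : Fin n) : bin n k j = (k.testBit j).toNat := by
  rw [bin, Nat.toNat_testBit]

theorem bin_apply_eq_bin_apply_iff (n k k' : ℕ) (j : Fin n) :
    bin n k j = bin n k' j ↔ k.testBit j = k'.testBit j := by
  rw [bin_apply, bin_apply]
  cases k.testBit j <;> cases k'.testBit j <;> decide

theorem bin_eq_finFunctionFinEquiv_symm (n : ℕ) (k : Fin (2 ^ n)) :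
    bin n k = (finFunctionFinEquiv.symm k : Fin n → ZMod 2) := by
  funext j
  apply ZMod.val_injective
  rw [bin, ZMod.val_natCast, Nat.mod_mod]
  exact (finFunctionFinEquiv_symm_apply_val k j).symm

theorem bin_surjective (n : ℕ) : Function.Surjective (bin n) := fun x => by
  obtain ⟨k, hk⟩ := finFunctionFinEquiv.symm.surjective (x : Fin n → Fin 2)
  exact ⟨k, by rw [bin_eq_finFunctionFinEquiv_symm, hk]⟩

theorem sum_range_bin {M : Type*} [AddCommMonoid M] (n : ℕ) (G : (Fin n → ZMod 2) → M) :
    ∑ k ∈ range (2 ^ n), G (bin n k) = ∑ x, G x := by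
  rw [sum_range]
  exact Fintype.sum_equiv finFunctionFinEquiv.symm _ _ fun k => by
    rw [bin_eq_finFunctionFinEquiv_symm]

theorem isPrimitiveRoot_ω (i : ℕ) : IsPrimitiveRoot (ω i) (2 ^ i) := by
  simpa [ω] using Complex.isPrimitiveRoot_exp (2 ^ i) (by positivity)

theorem ω_pow_two_pow_sub {n t : ℕ} (htn : t ≤ n) : ω n ^ 2 ^ (n - t) = ω t := by
  rw [ω, ← Complex.exp_nat_mul, ω]
  congr 1
  have h : (2 : ℂ) ^ n = 2 ^ (n - t) * 2 ^ t := by rw [← pow_add, Nat.sub_add_cancel htn]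
  rw [h]
  push_cast
  field_simp

theorem ω_zpow_neg_mul_two_pow_sub {n t : ℕ} (htn : t ≤ n) (k : ℕ) :
    ω n ^ (-(k * 2 ^ (n - t) : ℤ)) = (ω t)⁻¹ ^ k := by
  rw [zpow_neg, show (k * 2 ^ (n - t) : ℤ) = ((2 ^ (n - t) * k : ℕ) : ℤ) by push_cast; ring,
    zpow_natCast, pow_mul, ω_pow_two_pow_sub htn, inv_pow]

theorem ZMod.sum_univ_two {M : Type*} [AddCommMonoid M] (g : ZMod 2 → M) :
    ∑ α, g α = g 0 + g 1 :=
  Fin.sum_univ_two g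

section Subcube

variable {n : ℕ}

def subcube (S : Finset (Fin n)) (b : Fin n → ZMod 2) : Finset (Fin n → ZMod 2) :=
  {x | ∀ j ∈ S, x j = b j}

def signedSum (f : (Fin n → ZMod 2) → ZMod 2) (S : Finset (Fin n)) (b : Fin n → ZMod 2) : ℤ :=
  ∑ x ∈ subcube S b, (-1) ^ (f x).val

theorem subcube_congr {S : Finset (Fin n)} {b b' : Fin n → ZMod 2} (h : ∀ j ∈ S, b j = b' j) :
    subcube S b = subcube S b' :=
  filter_congr fun x _ => forall₂_congr fun j hj => by rw [h j hj]

theorem signedSum_congr (f : (Fin n → ZMod 2) → ZMod 2) {S : Finset (Fin n)}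
    {b b' : Fin n → ZMod 2} (h : ∀ j ∈ S, b j = b' j) : signedSum f S b = signedSum f S b' := by
  rw [signedSum, subcube_congr h, signedSum]

theorem card_subcube_eq (S : Finset (Fin n)) (b b' : Fin n → ZMod 2) :
    #(subcube S b) = #(subcube S b') :=
  card_equiv (Equiv.addRight (b' - b)) fun x => by simp [subcube, ← eq_sub_iff_add_eq]

theorem card_filter_subcube_add_card_filter_subcube (f : (Fin n → ZMod 2) → ZMod 2)
    (S : Finset (Fin n)) (b : Fin n → ZMod 2) :
    #{x ∈ subcube S b | f x = 0} + #{x ∈ subcube S b | f x = 1} = #(subcube S b) := by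
  rw [card_eq_sum_card_fiberwise (s := subcube S b) (f := f) (t := univ) (by simp)]
  rw [ZMod.sum_univ_two]

theorem signedSum_eq_card_sub_card (f : (Fin n → ZMod 2) → ZMod 2) (S : Finset (Fin n))
    (b : Fin n → ZMod 2) :
    signedSum f S b = #{x ∈ subcube S b | f x = 0} - #{x ∈ subcube S b | f x = 1} := by
  rw [signedSum, ← sum_fiberwise _ f, ZMod.sum_univ_two]
  have h : ∀ α : ZMod 2, ∑ x ∈ subcube S b with f x = α, (-1 : ℤ) ^ (f x).val
      = #{x ∈ subcube S b | f x = α} * (-1) ^ α.val := fun α => by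
    rw [sum_congr rfl fun x hx => by rw [(mem_filter.1 hx).2], sum_const, nsmul_eq_mul]
  rw [h, h]
  simp [show (1 : ZMod 2).val = 1 from rfl, sub_eq_add_neg]


theorem card_filter_eq_two_pow_card_mul {A : Type*} [DecidableEq A]
    (f : (Fin n → ZMod 2) → A) (S : Finset (Fin n)) {α : A} {K : ℕ}
    (hK : ∀ b, #{x ∈ subcube S b | f x = α} = K) : #{x | f x = α} = 2 ^ #S * K := by
  rw [card_eq_sum_card_fiberwise (f := S.restrict) (t := univ) (by simp)]
  have hfiber : ∀ a : S → ZMod 2, #{x ∈ {x | f x = α} | S.restrict x = a} = K := fun a => by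
    rw [← hK fun j => if h : j ∈ S then a ⟨j, h⟩ else 0]
    congr 1
    ext x
    simp only [subcube, mem_filter, mem_univ, true_and, funext_iff, Subtype.forall,
      Finset.restrict]
    rw [and_comm]
    exact and_congr_left fun _ => forall₂_congr fun j hj => by rw [dif_pos hj]
  rw [sum_congr rfl fun a _ => hfiber a, sum_const, card_univ, Fintype.card_fun,
    Fintype.card_coe, ZMod.card, smul_eq_mul]

theorem ci_iff_forall_card_filter_subcube_eq {A : Type*} [DecidableEq A] (t : ℕ)
    (f : (Fin n → ZMod 2) → A) :
    CI t f ↔ ∀ S : Finset (Fin n), #S = t → ∀ α b b',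
      #{x ∈ subcube S b | f x = α} = #{x ∈ subcube S b' | f x = α} := by
  have hcard : ∀ S b α, Nat.card {x : Fin n → ZMod 2 // f x = α ∧ ∀ j ∈ S, x j = b j}
      = #{x ∈ subcube S b | f x = α} := fun S b α => by
    rw [Nat.card_eq_fintype_card, Fintype.card_subtype, subcube, filter_filter]
    simp only [and_comm]
  simp only [CI, hcard, Nat.card_eq_fintype_card, Fintype.card_subtype]
  constructor
  · intro h S hS α b b'
    exact Nat.eq_of_mul_eq_mul_left (by positivity) ((h S hS b α).trans (h S hS b' α).symm)
  · intro h S hS a α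
    rw [card_filter_eq_two_pow_card_mul f S fun b => h S hS α b a, hS]

theorem forall_card_filter_subcube_eq_iff (f : (Fin n → ZMod 2) → ZMod 2) (S : Finset (Fin n)) :
    (∀ α b b', #{x ∈ subcube S b | f x = α} = #{x ∈ subcube S b' | f x = α}) ↔
      ∀ b b', signedSum f S b = signedSum f S b' := by
  refine ⟨fun h b b' => ?_, fun h α b b' => ?_⟩
  · rw [signedSum_eq_card_sub_card, signedSum_eq_card_sub_card, h 0 b b', h 1 b b']
  · have hb := card_filter_subcube_add_card_filter_subcube f S b
    have hb' := card_filter_subcube_add_card_filter_subcube f S b'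
    have hcard := card_subcube_eq S b b'
    have hsum := h b b'
    rw [signedSum_eq_card_sub_card, signedSum_eq_card_sub_card] at hsum
    fin_cases α <;> simp <;> omega

theorem ci_iff_forall_signedSum_eq (t : ℕ) (f : (Fin n → ZMod 2) → ZMod 2) :
    CI t f ↔ ∀ S : Finset (Fin n), #S = t → ∀ b b', signedSum f S b = signedSum f S b' := by
  simp only [ci_iff_forall_card_filter_subcube_eq, forall_card_filter_subcube_eq_iff]

theorem signedSum_eq_of_forall_update_eq (f : (Fin n → ZMod 2) → ZMod 2) {S : Finset (Fin n)}
    (h : ∀ i ∈ S, ∀ b a, signedSum f S (Function.update b i a) = signedSum f S b)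
    (b b' : Fin n → ZMod 2) : signedSum f S b = signedSum f S b' := by
  refine Function.apply_eq_apply_of_update_invariant (S := univ) (fun i _ c a => ?_)
    fun j hj => absurd (mem_univ j) hj
  by_cases hi : i ∈ S
  · exact h i hi c a
  · exact signedSum_congr f fun j hj => Function.update_of_ne (ne_of_mem_of_not_mem hj hi) _ _

end Subcube

def firstCoords (n t : ℕ) : Finset (Fin n) := {j | (j : ℕ) < t}

theorem card_firstCoords {n t : ℕ} (htn : t ≤ n) : #(firstCoords n t) = t := by
  simp [firstCoords, Fin.card_filter_val_lt, htn]

theorem bin_mem_subcube_firstCoords_iff {n t m : ℕ} (htn : t ≤ n) (hm : m < 2 ^ t) (k : ℕ) :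
    bin n k ∈ subcube (firstCoords n t) (bin n m) ↔ k % 2 ^ t = m := by
  rw [Nat.mod_two_pow_eq_iff hm]
  simp only [subcube, firstCoords, mem_filter, mem_univ, true_and, bin_apply_eq_bin_apply_iff]
  exact ⟨fun h j hj => h ⟨j, hj.trans_le htn⟩ hj, fun h j hj => h j hj⟩

theorem signedSum_firstCoords_bin {n t m : ℕ} (f : (Fin n → ZMod 2) → ZMod 2) (htn : t ≤ n)
    (hm : m < 2 ^ t) :
    signedSum f (firstCoords n t) (bin n m) =
      ∑ k ∈ range (2 ^ n) with k % 2 ^ t = m, (-1) ^ (f (bin n k)).val := by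
  rw [sum_filter]
  simp_rw [← bin_mem_subcube_firstCoords_iff htn hm]
  rw [sum_range_bin n fun x => if x ∈ subcube (firstCoords n t) (bin n m) then
    (-1 : ℤ) ^ (f x).val else 0, ← sum_filter, filter_mem_eq_inter, univ_inter, signedSum]

theorem sum_range_bin_mul_pow_eq {R : Type*} [CommRing R] {n t : ℕ}
    (f : (Fin n → ZMod 2) → ZMod 2) (htn : t ≤ n) {ζ : R} (hζ : ζ ^ 2 ^ t = 1) :
    ∑ k ∈ range (2 ^ n), (-1 : R) ^ (f (bin n k)).val * ζ ^ k =
      ∑ m ∈ range (2 ^ t), (signedSum f (firstCoords n t) (bin n m) : R) * ζ ^ m := by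
  calc _ = ∑ k ∈ range (2 ^ n), (-1 : R) ^ (f (bin n k)).val * ζ ^ (k % 2 ^ t) := by
        simp_rw [← pow_eq_pow_mod _ hζ]
    _ = ∑ m ∈ range (2 ^ t), ∑ k ∈ range (2 ^ n) with k % 2 ^ t = m,
          (-1 : R) ^ (f (bin n k)).val * ζ ^ (k % 2 ^ t) :=
        (sum_fiberwise_of_maps_to (fun k _ => mem_range.2 (Nat.mod_lt _ (by positivity))) _).symm
    _ = _ := sum_congr rfl fun m hm => by
        rw [signedSum_firstCoords_bin f htn (mem_range.1 hm), Int.cast_sum, sum_mul]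
        refine sum_congr rfl fun k hk => ?_
        rw [(mem_filter.1 hk).2]
        push_cast
        rfl

theorem fourier_eq_zero_iff {n t : ℕ} (f : (Fin n → ZMod 2) → ZMod 2) (ht : 0 < t)
    (htn : t ≤ n) :
    ∑ k ∈ range (2 ^ n), (-1 : ℂ) ^ (f (bin n k)).val * ω n ^ (-(k * 2 ^ (n - t) : ℤ)) = 0 ↔
      ∀ m < 2 ^ (t - 1), signedSum f (firstCoords n t) (bin n m) =
        signedSum f (firstCoords n t) (bin n (m + 2 ^ (t - 1))) := by
  set N := 2 ^ (t - 1)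
  have h2t : 2 ^ t = 2 * N := by rw [← pow_succ', Nat.sub_add_cancel ht]
  have hη : IsPrimitiveRoot (ω t)⁻¹ (2 * N) := h2t ▸ (isPrimitiveRoot_ω t).inv
  have htot : (2 * N).totient = N := by
    rw [← h2t, Nat.totient_prime_pow Nat.prime_two ht, Nat.add_one_sub_one, mul_one]
  simp_rw [ω_zpow_neg_mul_two_pow_sub htn]
  rw [sum_range_bin_mul_pow_eq f htn (h2t ▸ hη.pow_eq_one), h2t,
    sum_range_two_mul_eq_of_pow_eq_neg_one (hη.pow_eq_neg_one_of_two_mul (by positivity))]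
  refine ⟨fun h m hm => ?_, fun h => sum_eq_zero fun m hm => ?_⟩
  · refine sub_eq_zero.1 (hη.eq_zero_of_sum_eq_zero (c := fun m =>
      signedSum f (firstCoords n t) (bin n m) - signedSum f (firstCoords n t) (bin n (m + N)))
      ?_ (by rwa [htot]))
    rw [htot]
    push_cast
    exact h
  · rw [h m (mem_range.1 hm), sub_self, zero_mul]

section FlipInvariance

variable {n t : ℕ} (f : (Fin n → ZMod 2) → ZMod 2)

theorem signedSum_firstCoords_eq_of_agree_below (ht : 0 < t) (htn : t ≤ n)
    (hflip : ∀ m < 2 ^ (t - 1), signedSum f (firstCoords n t) (bin n m) =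
      signedSum f (firstCoords n t) (bin n (m + 2 ^ (t - 1))))
    {m : ℕ} (hm : m < 2 ^ (t - 1)) {c : Fin n → ZMod 2}
    (hc : ∀ j : Fin n, (j : ℕ) < t - 1 → c j = bin n m j) :
    signedSum f (firstCoords n t) c = signedSum f (firstCoords n t) (bin n m) := by
  set top : Fin n := ⟨t - 1, by omega⟩
  have hcongr : ∀ m', (∀ j : Fin n, (j : ℕ) < t - 1 → bin n m' j = bin n m j) →
      c top = bin n m' top →
      signedSum f (firstCoords n t) c = signedSum f (firstCoords n t) (bin n m') :=
    fun m' hlow htop => signedSum_congr f fun j hj => by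
      obtain hj | hj : (j : ℕ) < t - 1 ∨ j = top := by
        simp only [firstCoords, mem_filter, mem_univ, true_and] at hj
        rw [Fin.ext_iff]
        change (j : ℕ) < t - 1 ∨ (j : ℕ) = t - 1
        omega
      · rw [hc j hj, hlow j hj]
      · rw [hj, htop]
  obtain h0 | h1 : c top = 0 ∨ c top = 1 := by generalize c top = v; revert v; decide
  · exact hcongr m (fun _ _ => rfl) (by rw [h0, bin_apply, Nat.testBit_eq_false_of_lt hm]; rfl)
  · refine (hcongr (m + 2 ^ (t - 1)) (fun j hj => ?_) ?_).trans (hflip m hm).symm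
    · rw [bin_apply_eq_bin_apply_iff, add_comm, Nat.testBit_two_pow_add_gt hj]
    · rw [h1, bin_apply, add_comm, Nat.testBit_two_pow_add_eq, Nat.testBit_eq_false_of_lt hm]
      rfl

theorem signedSum_firstCoords_update_eq (ht : 0 < t) (htn : t ≤ n)
    (hflip : ∀ m < 2 ^ (t - 1), signedSum f (firstCoords n t) (bin n m) =
      signedSum f (firstCoords n t) (bin n (m + 2 ^ (t - 1))))
    (b : Fin n → ZMod 2) (a : ZMod 2) :
    signedSum f (firstCoords n t) (Function.update b ⟨t - 1, by omega⟩ a) =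
      signedSum f (firstCoords n t) b := by
  obtain ⟨k, rfl⟩ := bin_surjective n b
  have hm : k % 2 ^ (t - 1) < 2 ^ (t - 1) := Nat.mod_lt _ (by positivity)
  have hlow : ∀ j : Fin n, (j : ℕ) < t - 1 → bin n k j = bin n (k % 2 ^ (t - 1)) j :=
    fun j hj => by simp [bin_apply_eq_bin_apply_iff, Nat.testBit_mod_two_pow, hj]
  rw [signedSum_firstCoords_eq_of_agree_below f ht htn hflip hm hlow,
    signedSum_firstCoords_eq_of_agree_below f ht htn hflip hm]
  intro j hj
  rw [Function.update_of_ne (Fin.ne_of_lt hj), hlow j hj]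

end FlipInvariance

section Permutation

variable {n : ℕ} (f : (Fin n → ZMod 2) → ZMod 2) (π : Equiv.Perm (Fin n))

theorem signedSum_comp_perm (S : Finset (Fin n)) (b : Fin n → ZMod 2) :
    signedSum (fun x => f (fun j => x (π j))) S b =
      signedSum f (S.map π.symm.toEmbedding) (fun j => b (π j)) :=
  sum_equiv (Equiv.arrowCongr π.symm (Equiv.refl _))
    (fun x => by simpa [subcube] using π.symm.forall_congr_left (p := fun j => j ∈ S → x j = b j))
    fun _ _ => rfl

theorem signedSum_update_eq_of_comp_perm {S : Finset (Fin n)} {i : Fin n}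
    (h : ∀ b a, signedSum (fun x => f (fun j => x (π j))) S (Function.update b i a) =
      signedSum (fun x => f (fun j => x (π j))) S b)
    (b : Fin n → ZMod 2) (a : ZMod 2) :
    signedSum f (S.map π.symm.toEmbedding) (Function.update b (π.symm i) a) =
      signedSum f (S.map π.symm.toEmbedding) b := by
  have hb := signedSum_comp_perm f π S (fun j => b (π.symm j))
  have hub := signedSum_comp_perm f π S (Function.update (fun j => b (π.symm j)) i a)
  have hupdate : (fun j => Function.update (fun j => b (π.symm j)) i a (π j)) =
      Function.update b (π.symm i) a := by
    funext j
    simp [Function.update_apply, Equiv.eq_symm_apply]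
  simp only [Equiv.symm_apply_apply, hupdate] at hb hub
  rw [← hub, h, hb]

end Permutation

theorem stmt7_general (n t : ℕ) (ht : 0 < t) (htn : t ≤ n)
    (f : (Fin n → ZMod 2) → ZMod 2) :
    CI t f ↔ ∀ π : Equiv.Perm (Fin n),
      ∑ k ∈ Finset.range (2 ^ n),
        (-1 : ℂ) ^ (f (fun j => bin n k (π j))).val * ω n ^ (-(k * 2 ^ (n - t) : ℤ)) = 0 := by
  have hfourier : ∀ π : Equiv.Perm (Fin n), _ ↔ _ :=
    fun π => fourier_eq_zero_iff (fun x => f (fun j => x (π j))) ht htn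
  rw [ci_iff_forall_signedSum_eq, forall_congr' hfourier]
  constructor
  · intro hconst π m _
    rw [signedSum_comp_perm, signedSum_comp_perm]
    exact hconst _ (by rw [card_map, card_firstCoords htn]) _ _
  · intro hflip S hS
    refine signedSum_eq_of_forall_update_eq f fun i hi c a => ?_
    obtain ⟨σ, hσS, hσi⟩ := Equiv.Perm.exists_map_finset_eq_and_apply_eq
      ((card_firstCoords htn).trans hS.symm) (a := ⟨t - 1, by omega⟩)
      (mem_filter.2 ⟨mem_univ _, Nat.sub_lt ht one_pos⟩) hi
    have := signedSum_update_eq_of_comp_perm f σ.symm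
      (signedSum_firstCoords_update_eq _ ht htn (hflip σ.symm)) c a
    rwa [Equiv.symm_symm, hσS, hσi] at this

/-- Fourier spectral characterization of single-output CI Boolean functions:
`f` is `t`-th order correlation-immune iff `ℱ_{π·f}(2^{n-t}) = 0` for every `π`. -/
theorem stmt7 (n t : ℕ) (hn : 0 < n) (ht : 0 < t) (htn : t ≤ n)
    (f : (Fin n → ZMod 2) → ZMod 2) :
    CI t f ↔ ∀ π : Equiv.Perm (Fin n),
      ∑ k ∈ Finset.range (2 ^ n),
        (-1 : ℂ) ^ (f (fun j => bin n k (π j))).val * ω n ^ (-(k * 2 ^ (n - t) : ℤ)) = 0 :=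
  stmt7_general n t ht htn f
end
end
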